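/- R is translation invariant if and only if the consolidated uncertainty set U is translation invariant: U_{t+1}(X + Z) = U_{t+1}(X) + Z for all F_t-measurable bounded Z. -/

import Mathlib

/-!
Since `ρ` commutes with adding a bounded `F_t`-measurable `Z`, translating the sublevel set
`{ρ ≤ g}` by `Z` gives `{ρ ≤ g + Z}`. Hence `U (X + Z) = U X + Z` says exactly that
`{ρ ≤ R (X + Z)} = {ρ ≤ R X + Z}`. Both thresholds are least upper bounds of `ρ` over a set
(`u (X + Z)`, resp. `u X + Z`), and such a least upper bound is determined by the sublevel sets
of `ρ`: it lies below `b` iff the set lies in `{ρ ≤ b}`.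
-/

open Set

/-- A random variable is (essentially) bounded, i.e. lies in `L^∞`. -/
def IsBdd {Ω : Type*} (Y : Ω → ℝ) : Prop := ∃ C : ℝ, ∀ ω, |Y ω| ≤ C

/-- The robust risk measure `R X := esssup { ρ Z : Z ∈ u X }`. -/
noncomputable def robustR {Ω : Type*} (ρ : (Ω → ℝ) → (Ω → ℝ))
    (u : (ℕ → Ω → ℝ) → Set (Ω → ℝ)) (X : ℕ → Ω → ℝ) : Ω → ℝ :=
  sSup (ρ '' u X)

/-- The consolidated uncertainty set `U X := { Y : ρ Y ≤ R X }`. -/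
def consolidated {Ω : Type*} (ρ : (Ω → ℝ) → (Ω → ℝ))
    (u : (ℕ → Ω → ℝ) → Set (Ω → ℝ)) (X : ℕ → Ω → ℝ) : Set (Ω → ℝ) :=
  {Y : Ω → ℝ | ρ Y ≤ robustR ρ u X}

section Translation

variable {β : Type*} [AddCommGroup β] [PartialOrder β] [IsOrderedAddMonoid β]

theorem image_add_const_setOf_le {α : Type*} [AddGroup α] {ρ : α → β} {Z : α} {c : β}
    (hρ : ∀ Y, ρ (Y + Z) = ρ Y + c) (g : β) :
    (· + Z) '' {Y | ρ Y ≤ g} = {Y | ρ Y ≤ g + c} := by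
  ext Y
  constructor
  · rintro ⟨W, hW, rfl⟩
    simpa only [mem_ofPred_eq, hρ, add_le_add_iff_right] using hW
  · intro hY
    refine ⟨Y - Z, ?_, sub_add_cancel Y Z⟩
    have hρY := hρ (Y - Z)
    rw [sub_add_cancel] at hρY
    rwa [mem_ofPred_eq, hρY, add_le_add_iff_right] at hY

theorem IsLUB.add_const {s : Set β} {a : β} (h : IsLUB s a) (c : β) :
    IsLUB ((· + c) '' s) (a + c) :=
  (OrderIso.addRight c).isLUB_image'.2 h

end Translation

section LeastUpperBound

variable {α β : Type*} {f : α → β} {A B : Set α} {a b : β}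

theorem IsLUB.le_iff_subset_setOf_le [Preorder β] (h : IsLUB (f '' A) a) :
    a ≤ b ↔ A ⊆ {x | f x ≤ b} := by
  rw [isLUB_le_iff h, mem_upperBounds_iff_subset_Iic, image_subset_iff]
  rfl

theorem IsLUB.eq_of_setOf_le_eq [PartialOrder β] (ha : IsLUB (f '' A) a)
    (hb : IsLUB (f '' B) b) (h : {x | f x ≤ a} = {x | f x ≤ b}) : a = b :=
  le_antisymm (ha.le_iff_subset_setOf_le.2 (h ▸ ha.le_iff_subset_setOf_le.1 le_rfl))
    (hb.le_iff_subset_setOf_le.2 (h ▸ hb.le_iff_subset_setOf_le.1 le_rfl))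

end LeastUpperBound

theorem isLUB_robustR {Ω : Type*} {ρ : (Ω → ℝ) → (Ω → ℝ)} (hmono : Monotone ρ)
    {u : (ℕ → Ω → ℝ) → Set (Ω → ℝ)} {X : ℕ → Ω → ℝ} (hne : (u X).Nonempty)
    (hub : ∃ c : ℝ, ∀ Y ∈ u X, Y ≤ fun _ => c) :
    IsLUB (ρ '' u X) (robustR ρ u X) := by
  obtain ⟨c, hc⟩ := hub
  refine isLUB_csSup (hne.image ρ) ⟨ρ fun _ => c, ?_⟩
  rintro _ ⟨Y, hY, rfl⟩
  exact hmono (hc Y hY)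

theorem transInv_R_iff_transInv_U_general {Ω : Type*} (m : MeasurableSpace Ω) (t : ℕ)
    (ρ : (Ω → ℝ) → (Ω → ℝ))
    (hmono : ∀ X Y : Ω → ℝ, X ≤ Y → ρ X ≤ ρ Y)
    (htrans : ∀ Y Z : Ω → ℝ, @Measurable Ω ℝ m _ Z → IsBdd Z → ρ (Y + Z) = ρ Y + Z)
    (u : (ℕ → Ω → ℝ) → Set (Ω → ℝ))
    (hne : ∀ X, (u X).Nonempty)
    (hub : ∀ X, ∃ c : ℝ, ∀ Y ∈ u X, Y ≤ fun _ => c) :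
    (∀ (X : ℕ → Ω → ℝ) (Z : Ω → ℝ), @Measurable Ω ℝ m _ Z → IsBdd Z →
        robustR ρ u (fun n => if n = t then X n + Z else X n) = robustR ρ u X + Z) ↔
      (∀ (X : ℕ → Ω → ℝ) (Z : Ω → ℝ), @Measurable Ω ℝ m _ Z → IsBdd Z →
        consolidated ρ u (fun n => if n = t then X n + Z else X n) =
          (· + Z) '' consolidated ρ u X) := by
  have hLUB X := isLUB_robustR (fun Y Y' => hmono Y Y') (hne X) (hub X)
  refine forall₂_congr fun X Z => imp_congr_right fun hZm => imp_congr_right fun hZb => ?_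
  have htransZ Y := htrans Y Z hZm hZb
  rw [consolidated, consolidated, image_add_const_setOf_le htransZ]
  refine ⟨fun h => h ▸ rfl, fun h => (hLUB _).eq_of_setOf_le_eq (B := (· + Z) '' u X) ?_ h⟩
  rw [image_image, image_congr fun Y _ => htransZ Y, ← image_image (· + Z) ρ]
  exact (hLUB X).add_const Z

/-- `R` is translation invariant if and only if the consolidated
uncertainty set `U` is translation invariant, `U (X + Z) = U X + Z`, for all
`F_t`-measurable bounded `Z` (added in the time-`t` slot of the process). -/
theorem transInv_R_iff_transInv_U {Ω : Type*} (m : MeasurableSpace Ω) (t : ℕ)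
    (ρ : (Ω → ℝ) → (Ω → ℝ))
    (hmono : ∀ X Y : Ω → ℝ, X ≤ Y → ρ X ≤ ρ Y)
    (htrans : ∀ Y Z : Ω → ℝ, @Measurable Ω ℝ m _ Z → IsBdd Z → ρ (Y + Z) = ρ Y + Z)
    (u : (ℕ → Ω → ℝ) → Set (Ω → ℝ))
    (hne : ∀ X, (u X).Nonempty)
    (hb : ∀ X, u X ⊆ {Y | IsBdd Y})
    (hub : ∀ X, ∃ c : ℝ, ∀ Y ∈ u X, Y ≤ fun _ => c)
    (hRmeas : ∀ X, @Measurable Ω ℝ m _ (robustR ρ u X)) :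
    (∀ (X : ℕ → Ω → ℝ) (Z : Ω → ℝ), @Measurable Ω ℝ m _ Z → IsBdd Z →
        robustR ρ u (fun n => if n = t then X n + Z else X n) = robustR ρ u X + Z) ↔
      (∀ (X : ℕ → Ω → ℝ) (Z : Ω → ℝ), @Measurable Ω ℝ m _ Z → IsBdd Z →
        consolidated ρ u (fun n => if n = t then X n + Z else X n) =
          (· + Z) '' consolidated ρ u X) :=
  transInv_R_iff_transInv_U_general m t ρ hmono htrans u hne hub
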